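/- Let k ≥ 3, m ≥ 0 and n ≥ k−1 be integers. Then #{Δ ∈ P_k(m,n) : d_1 = d_{k−1} ≥ 2, α_1 = d_1, α_2 = 0, and β_1 = d_1} = #{Δ ∈ P_k(m,n+1) : d_1 ≥ 3, d_i = d_1 − 1 for all 2 ≤ i ≤ k−1, γ^1 = ⋯ = γ^{k−2} = ∅, and α = ∅}. -/

import Mathlib

/-- A partition: a finite nonincreasing list of positive integers. -/
structure Partn where
  parts : List ℕ
  sorted : parts.Pairwise (· ≥ ·)
  pos : ∀ x ∈ parts, 0 < x

namespace Partn

/-- The weight `|λ|` of a partition: the sum of its parts. -/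
def wt (p : Partn) : ℕ := p.parts.sum

/-- The length `ℓ(λ)`: the number of parts. -/
def len (p : Partn) : ℕ := p.parts.length

/-- The `j`-th largest part `λ_j` (1-indexed), with `λ_j = 0` for `j > ℓ(λ)`. -/
def part (p : Partn) (j : ℕ) : ℕ := p.parts.getD (j - 1) 0

/-- `f_j(λ)`: the number of parts of `λ` equal to `j`. -/
def freq (p : Partn) (j : ℕ) : ℕ := p.parts.count j

/-- The empty partition. -/
def empty : Partn := ⟨[], List.Pairwise.nil, by simp⟩

end Partn

/-- The type of `(2k-1)`-tuples `(α, β, γ^1, …, γ^{k-2}, ϖ^1, …, ϖ^{k-1})`. -/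
abbrev PTuple (k : ℕ) : Type :=
  Partn × Partn × (Fin (k - 2) → Partn) × (Fin (k - 1) → Partn)

/-- `d_j := ℓ(ϖ^j)` (1-indexed, `0` out of range). -/
def dIdx (k : ℕ) (w : Fin (k - 1) → Partn) (j : ℕ) : ℕ :=
  if h : j - 1 < k - 1 then (w ⟨j - 1, h⟩).len else 0

/-- `γ^j` (1-indexed, the empty partition out of range). -/
def gIdx (k : ℕ) (g : Fin (k - 2) → Partn) (j : ℕ) : Partn :=
  if h : j - 1 < k - 2 then g ⟨j - 1, h⟩ else Partn.empty

/-- Membership in Garvan-type set `P_k(m, n)` of `(2k-1)`-tuples of partitions. -/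
def PkMem (k : ℕ) (m : ℤ) (n : ℕ) (t : PTuple k) : Prop :=
  (∀ i : Fin (k - 1), (t.2.2.2 i).parts =
      List.replicate (t.2.2.2 i).len (t.2.2.2 i).len) ∧
  (∀ j, 1 ≤ j → j + 1 ≤ k - 1 → dIdx k t.2.2.2 (j + 1) ≤ dIdx k t.2.2.2 j) ∧
  1 ≤ dIdx k t.2.2.2 (k - 1) ∧
  (∀ x ∈ t.1.parts, x ≤ dIdx k t.2.2.2 (k - 1)) ∧
  (∀ x ∈ t.2.1.parts, x ≤ dIdx k t.2.2.2 (k - 1)) ∧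
  (t.1.len : ℤ) - (t.2.1.len : ℤ) = m ∧
  (∀ j, 1 ≤ j → j ≤ k - 2 →
      (gIdx k t.2.2.1 j).len ≤ dIdx k t.2.2.2 j - dIdx k t.2.2.2 (j + 1)) ∧
  t.1.wt + t.2.1.wt + (∑ i, (t.2.2.1 i).wt) + (∑ i, (t.2.2.2 i).wt) = n

/-!
Both sets are images of the same set of side lengths `d ≥ 2`. On the left, `d_1 = d_{k-1}` and
the chain condition force `ϖ^i = (d^d)` for all `i`, hence every `γ^i = ∅`; moreover `α = (d)`,
and `ℓ(β) ≤ ℓ(α) = 1` gives `β = (d)` and `m = 0`, so `n = (k-1)d² + 2d`. On the right,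
`α = ∅` forces `β = ∅` and `m = 0`, and with `d = d_1 - 1` the weight is
`n + 1 = (d+1)² + (k-2)d²`. These two conditions on `d` agree, and each tuple is determined
by `d`.
-/

namespace Partn

@[ext] theorem ext {p q : Partn} (h : p.parts = q.parts) : p = q := by
  cases p; cases q; congr

theorem len_le_one_of_part_two_eq_zero {p : Partn} (h : p.part 2 = 0) : p.len ≤ 1 := by
  rcases hparts : p.parts with _ | ⟨x, _ | ⟨y, l⟩⟩
  · simp [len, hparts]
  · simp [len, hparts]
  · simp only [part, hparts, Nat.add_one_sub_one, List.getD_cons_succ, List.getD_cons_zero] at h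
    exact absurd h (p.pos y (by simp [hparts])).ne'

theorem parts_eq_singleton {p : Partn} (hp : p.len ≤ 1) (h : 0 < p.part 1) :
    p.parts = [p.part 1] := by
  rcases hparts : p.parts with _ | ⟨x, _ | ⟨y, l⟩⟩
  · simp [part, hparts] at h
  · simp [part, hparts]
  · simp [len, hparts] at hp

@[simps]
def square (d : ℕ) : Partn :=
  ⟨List.replicate d d, List.pairwise_replicate.2 (Or.inr le_rfl),
    fun _ hx => by rcases List.mem_replicate.1 hx with ⟨hd, rfl⟩; omega⟩

@[simps]
def single (d : ℕ+) : Partn := ⟨[d], List.pairwise_singleton _ _, by simp⟩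

@[simp] theorem len_square (d : ℕ) : (square d).len = d := by simp [len]
@[simp] theorem wt_square (d : ℕ) : (square d).wt = d * d := by simp [wt]
@[simp] theorem len_single (d : ℕ+) : (single d).len = 1 := rfl
@[simp] theorem wt_single (d : ℕ+) : (single d).wt = d := by simp [wt]
@[simp] theorem part_one_single (d : ℕ+) : (single d).part 1 = d := rfl
@[simp] theorem parts_empty : empty.parts = [] := rfl
@[simp] theorem len_empty : empty.len = 0 := rfl
@[simp] theorem wt_empty : empty.wt = 0 := rfl

end Partn

open Partn

section Indexing

variable {k : ℕ}

theorem dIdx_val_succ (w : Fin (k - 1) → Partn) (i : Fin (k - 1)) :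
    dIdx k w (i + 1) = (w i).len :=
  dif_pos i.isLt

theorem dIdx_of_le (w : Fin (k - 1) → Partn) {j : ℕ} (hj : 1 ≤ j) (hjk : j ≤ k - 1) :
    dIdx k w j = (w ⟨j - 1, by omega⟩).len :=
  dif_pos (by omega)

theorem dIdx_of_lt (w : Fin (k - 1) → Partn) {j : ℕ} (hj : k - 1 < j) : dIdx k w j = 0 :=
  dif_neg (by omega)

theorem gIdx_val_succ (g : Fin (k - 2) → Partn) (i : Fin (k - 2)) :
    gIdx k g (i + 1) = g i :=
  dif_pos i.isLt

@[simp] theorem gIdx_const_empty (j : ℕ) : gIdx k (fun _ => Partn.empty) j = Partn.empty := by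
  unfold gIdx; split <;> rfl

/-- Beyond `k - 1` the sequence `d_j` is `0`, so the chain condition extends to all `j ≥ 1`. -/
theorem dIdx_antitoneOn {w : Fin (k - 1) → Partn}
    (h : ∀ j, 1 ≤ j → j + 1 ≤ k - 1 → dIdx k w (j + 1) ≤ dIdx k w j) :
    AntitoneOn (dIdx k w) (Set.Ici 1) := by
  refine antitoneOn_nat_Ici_of_succ_le fun j hj => ?_
  by_cases hjk : j + 1 ≤ k - 1
  · exact h j hj hjk
  · rw [dIdx_of_lt w (by omega)]; exact Nat.zero_le _

end Indexing

theorem sum_fin_ite_val_eq_zero {n : ℕ} (hn : 0 < n) (a b : ℕ) :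
    ∑ i : Fin n, (if (i : ℕ) = 0 then a else b) = a + (n - 1) * b := by
  obtain ⟨n, rfl⟩ := Nat.exists_eq_add_one_of_ne_zero hn.ne'
  simp [Fin.sum_univ_succ]

theorem succ_mul_succ_add_iff {k : ℕ} (hk : 2 ≤ k) (d n : ℕ) :
    (d + 1) * (d + 1) + (k - 2) * (d * d) = n + 1 ↔ (k - 1) * (d * d) + 2 * d = n := by
  obtain ⟨K, rfl⟩ := Nat.exists_eq_add_of_le' hk
  have expand :
      (d + 1) * (d + 1) + (K + 2 - 2) * (d * d) = (K + 2 - 1) * (d * d) + 2 * d + 1 := by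
    simp only [Nat.add_sub_cancel, Nat.add_succ_sub_one]; ring
  omega

/-- The common value `d` of the `d_i` on the left, which is `d_1 - 1` on the right; it lives in
`ℕ+` so that `(d)` is a partition. -/
def sideLengths (k : ℕ) (m : ℤ) (n : ℕ) : Set ℕ+ :=
  {d | 2 ≤ d ∧ m = 0 ∧ (k - 1) * (d * d) + 2 * (d : ℕ) = n}

def constTuple (k : ℕ) (d : ℕ+) : PTuple k :=
  (single d, single d, fun _ => Partn.empty, fun _ => square d)

def raisedTuple (k : ℕ) (d : ℕ+) : PTuple k :=
  (Partn.empty, Partn.empty, fun _ => Partn.empty,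
    fun i => square (if (i : ℕ) = 0 then (d : ℕ) + 1 else d))

theorem constTuple_injective (k : ℕ) : Function.Injective (constTuple k) := fun d e h => by
  simpa [constTuple] using congrArg (fun t : PTuple k => t.1.part 1) h

theorem raisedTuple_injective {k : ℕ} (hk : 2 ≤ k) : Function.Injective (raisedTuple k) :=
  fun d e h => by
    simpa [raisedTuple] using congrArg (fun t : PTuple k => (t.2.2.2 ⟨0, by omega⟩).len) h

section Characterization

variable {k : ℕ} {m : ℤ} {n : ℕ}

theorem dIdx_const_square {d j : ℕ} (hj : 1 ≤ j) (hjk : j ≤ k - 1) :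
    dIdx k (fun _ => square d) j = d := by
  rw [dIdx_of_le _ hj hjk, len_square]

theorem dIdx_raised_square {a b j : ℕ} (hj : 1 ≤ j) (hjk : j ≤ k - 1) :
    dIdx k (fun i => square (if (i : ℕ) = 0 then a else b)) j = if j = 1 then a else b := by
  rw [dIdx_of_le _ hj hjk, len_square]
  exact if_congr (by simp only; omega) rfl rfl

theorem constTuple_mem (hk : 2 ≤ k) {d : ℕ+} (hd : d ∈ sideLengths k m n) :
    PkMem k m n (constTuple k d) ∧
      dIdx k (constTuple k d).2.2.2 1 = dIdx k (constTuple k d).2.2.2 (k - 1) ∧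
      2 ≤ dIdx k (constTuple k d).2.2.2 1 ∧
      (constTuple k d).1.part 1 = dIdx k (constTuple k d).2.2.2 1 ∧
      (constTuple k d).1.part 2 = 0 ∧
      (constTuple k d).2.1.part 1 = dIdx k (constTuple k d).2.2.2 1 := by
  obtain ⟨hd2, rfl, hn⟩ := hd
  have hd : ∀ j, 1 ≤ j → j ≤ k - 1 → dIdx k (constTuple k d).2.2.2 j = d :=
    fun j hj hjk => dIdx_const_square hj hjk
  have hd1 := hd 1 le_rfl (by omega)
  have hdk := hd (k - 1) (by omega) le_rfl
  have hd2 : 2 ≤ (d : ℕ) := by exact_mod_cast hd2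
  refine ⟨⟨fun _ => by simp [constTuple], fun j hj hjk => ?_, by omega, fun x hx => ?_,
    fun x hx => ?_, by simp [constTuple], fun j _ _ => by simp [constTuple], ?_⟩,
    by rw [hd1, hdk], by omega, by rw [hd1]; rfl, rfl, by rw [hd1]; rfl⟩
  · rw [hd j hj (by omega), hd (j + 1) (by omega) hjk]
  · simp only [constTuple, single_parts, List.mem_singleton] at hx
    omega
  · simp only [constTuple, single_parts, List.mem_singleton] at hx
    omega
  · simp only [constTuple, wt_single, wt_empty, wt_square, Finset.sum_const_zero,
      Finset.sum_const, Finset.card_univ, Fintype.card_fin, smul_eq_mul]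
    omega

theorem eq_constTuple_of_mem (hm : 0 ≤ m) {t : PTuple k} (ht : PkMem k m n t)
    (hd : dIdx k t.2.2.2 1 = dIdx k t.2.2.2 (k - 1)) (hd2 : 2 ≤ dIdx k t.2.2.2 1)
    (hα1 : t.1.part 1 = dIdx k t.2.2.2 1) (hα2 : t.1.part 2 = 0)
    (hβ1 : t.2.1.part 1 = dIdx k t.2.2.2 1) :
    ∃ d ∈ sideLengths k m n, constTuple k d = t := by
  obtain ⟨α, β, γ, ϖ⟩ := t
  obtain ⟨hsq, hchain, -, -, -, hlen, hγ, hwt⟩ := ht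
  dsimp only at *
  obtain ⟨d, hd_def⟩ : ∃ d, dIdx k ϖ 1 = d := ⟨_, rfl⟩
  rw [hd_def] at hd hd2 hα1 hβ1
  have hϖd (j : ℕ) (hj : 1 ≤ j) (hjk : j ≤ k - 1) : dIdx k ϖ j = d := by
    have anti := dIdx_antitoneOn hchain
    refine le_antisymm ?_ ?_
    · exact hd_def ▸ anti (Set.mem_Ici.2 le_rfl) (Set.mem_Ici.2 hj) hj
    · exact hd ▸ anti (Set.mem_Ici.2 hj) (Set.mem_Ici.2 (hj.trans hjk)) hjk
  have hϖ : ϖ = fun _ => square d := funext fun i => Partn.ext <| by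
    rw [hsq i, ← dIdx_val_succ, hϖd _ (by omega) (by omega), square_parts]
  have hγ : γ = fun _ => Partn.empty := funext fun i => Partn.ext <| by
    have := hγ (i + 1) (by omega) (by omega)
    rw [gIdx_val_succ, hϖd _ (by omega) (by omega), hϖd _ (by omega) (by omega),
      Nat.sub_self, Nat.le_zero, len, List.length_eq_zero_iff] at this
    exact this
  lift d to ℕ+ using (by omega)
  have hα : α = single d := Partn.ext <| by
    rw [parts_eq_singleton (len_le_one_of_part_two_eq_zero hα2) (by omega), hα1, single_parts]
  subst hα
  have hβ : β = single d := by
    have hβlen : β.len ≤ 1 := by rw [len_single] at hlen; omega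
    exact Partn.ext <| by rw [parts_eq_singleton hβlen (by omega), hβ1, single_parts]
  subst hβ hγ hϖ
  refine ⟨d, ⟨by exact_mod_cast hd2, by simpa using hlen.symm, ?_⟩, rfl⟩
  simp only [wt_single, wt_empty, wt_square, Finset.sum_const_zero, Finset.sum_const,
    Finset.card_univ, Fintype.card_fin, smul_eq_mul] at hwt
  omega

theorem setOf_eq_image_constTuple (hk : 2 ≤ k) (hm : 0 ≤ m) :
    {t : PTuple k | PkMem k m n t ∧
        dIdx k t.2.2.2 1 = dIdx k t.2.2.2 (k - 1) ∧ 2 ≤ dIdx k t.2.2.2 1 ∧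
        t.1.part 1 = dIdx k t.2.2.2 1 ∧ t.1.part 2 = 0 ∧
        t.2.1.part 1 = dIdx k t.2.2.2 1} = constTuple k '' sideLengths k m n := by
  ext t
  constructor
  · rintro ⟨ht, hd, hd2, hα1, hα2, hβ1⟩
    exact eq_constTuple_of_mem hm ht hd hd2 hα1 hα2 hβ1
  · rintro ⟨d, hd, rfl⟩
    exact constTuple_mem hk hd

theorem raisedTuple_mem (hk : 2 ≤ k) {d : ℕ+} (hd : d ∈ sideLengths k m n) :
    PkMem k m (n + 1) (raisedTuple k d) ∧ 3 ≤ dIdx k (raisedTuple k d).2.2.2 1 ∧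
      (∀ j, 2 ≤ j → j ≤ k - 1 →
        dIdx k (raisedTuple k d).2.2.2 j = dIdx k (raisedTuple k d).2.2.2 1 - 1) ∧
      (∀ j, 1 ≤ j → j ≤ k - 2 → (gIdx k (raisedTuple k d).2.2.1 j).parts = []) ∧
      (raisedTuple k d).1.parts = [] := by
  obtain ⟨hd2, rfl, hn⟩ := hd
  have hd : ∀ j, 1 ≤ j → j ≤ k - 1 →
      dIdx k (raisedTuple k d).2.2.2 j = if j = 1 then (d : ℕ) + 1 else d :=
    fun j hj hjk => dIdx_raised_square hj hjk
  have hd2 : 2 ≤ (d : ℕ) := by exact_mod_cast hd2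
  have hd1 := hd 1 le_rfl (by omega)
  rw [if_pos rfl] at hd1
  refine ⟨⟨fun _ => by simp [raisedTuple], fun j hj hjk => ?_, ?_, by simp [raisedTuple],
    by simp [raisedTuple], by simp [raisedTuple], fun j _ _ => by simp [raisedTuple], ?_⟩,
    by omega, fun j hj hjk => ?_, fun j _ _ => by simp [raisedTuple], rfl⟩
  · rw [hd j hj (by omega), hd (j + 1) (by omega) hjk]
    split_ifs <;> omega
  · rw [hd (k - 1) (by omega) le_rfl]; split_ifs <;> omega
  · simp only [raisedTuple, wt_empty, wt_square, Finset.sum_const_zero, apply_ite,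
      sum_fin_ite_val_eq_zero (show 0 < k - 1 by omega)]
    rw [Nat.sub_sub]
    simpa using (succ_mul_succ_add_iff hk _ _).2 hn
  · rw [hd j (by omega) hjk, hd1, if_neg (by omega)]
    rfl

theorem eq_raisedTuple_of_mem (hk : 2 ≤ k) (hm : 0 ≤ m) {t : PTuple k}
    (ht : PkMem k m (n + 1) t) (hd3 : 3 ≤ dIdx k t.2.2.2 1)
    (hd : ∀ j, 2 ≤ j → j ≤ k - 1 → dIdx k t.2.2.2 j = dIdx k t.2.2.2 1 - 1)
    (hγ : ∀ j, 1 ≤ j → j ≤ k - 2 → (gIdx k t.2.2.1 j).parts = [])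
    (hα : t.1.parts = []) :
    ∃ d ∈ sideLengths k m n, raisedTuple k d = t := by
  obtain ⟨α, β, γ, ϖ⟩ := t
  obtain ⟨hsq, -, -, -, -, hlen, -, hwt⟩ := ht
  dsimp only at *
  obtain ⟨d, hd_def⟩ : ∃ d, dIdx k ϖ 1 = d + 1 := ⟨dIdx k ϖ 1 - 1, by omega⟩
  rw [hd_def] at hd hd3
  have hϖ : ϖ = fun i : Fin (k - 1) => square (if (i : ℕ) = 0 then d + 1 else d) :=
    funext fun i => Partn.ext <| by
      rw [hsq i, ← dIdx_val_succ, square_parts]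
      split_ifs with hi
      · rw [hi, hd_def]
      · rw [hd _ (by omega) (by omega), Nat.add_sub_cancel]
  have hγ : γ = fun _ => Partn.empty := funext fun i => Partn.ext <| by
    simpa [gIdx_val_succ] using hγ (i + 1) (by omega) (by omega)
  have hα : α = Partn.empty := Partn.ext hα
  subst hα
  have hβ : β = Partn.empty := Partn.ext <| List.length_eq_zero_iff.1 <| by
    simp only [len_empty] at hlen; unfold len at hlen; omega
  lift d to ℕ+ using (by omega)
  subst hβ hγ hϖ
  have hd2 : 2 ≤ (d : ℕ) := by omega
  refine ⟨d, ⟨by exact_mod_cast hd2, by simpa using hlen.symm, ?_⟩, rfl⟩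
  simp only [wt_empty, wt_square, Finset.sum_const_zero, apply_ite,
    sum_fin_ite_val_eq_zero (show 0 < k - 1 by omega), Nat.sub_sub, zero_add] at hwt
  exact (succ_mul_succ_add_iff hk _ _).1 hwt

theorem setOf_eq_image_raisedTuple (hk : 2 ≤ k) (hm : 0 ≤ m) :
    {t : PTuple k | PkMem k m (n + 1) t ∧ 3 ≤ dIdx k t.2.2.2 1 ∧
        (∀ j, 2 ≤ j → j ≤ k - 1 → dIdx k t.2.2.2 j = dIdx k t.2.2.2 1 - 1) ∧
        (∀ j, 1 ≤ j → j ≤ k - 2 → (gIdx k t.2.2.1 j).parts = []) ∧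
        t.1.parts = []} = raisedTuple k '' sideLengths k m n := by
  ext t
  constructor
  · rintro ⟨ht, hd3, hd, hγ, hα⟩
    exact eq_raisedTuple_of_mem hk hm ht hd3 hd hγ hα
  · rintro ⟨d, hd, rfl⟩
    exact raisedTuple_mem hk hd

end Characterization

theorem lem_pp7_general (k : ℕ) (m : ℤ) (n : ℕ) (hk : 3 ≤ k) (hm : 0 ≤ m) :
    {t : PTuple k | PkMem k m n t ∧
        dIdx k t.2.2.2 1 = dIdx k t.2.2.2 (k - 1) ∧ 2 ≤ dIdx k t.2.2.2 1 ∧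
        t.1.part 1 = dIdx k t.2.2.2 1 ∧ t.1.part 2 = 0 ∧
        t.2.1.part 1 = dIdx k t.2.2.2 1}.ncard =
      {t : PTuple k | PkMem k m (n + 1) t ∧ 3 ≤ dIdx k t.2.2.2 1 ∧
        (∀ j, 2 ≤ j → j ≤ k - 1 → dIdx k t.2.2.2 j = dIdx k t.2.2.2 1 - 1) ∧
        (∀ j, 1 ≤ j → j ≤ k - 2 → (gIdx k t.2.2.1 j).parts = []) ∧
        t.1.parts = []}.ncard := by
  have hk2 : 2 ≤ k := by omega
  rw [setOf_eq_image_constTuple hk2 hm, setOf_eq_image_raisedTuple hk2 hm,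
    Set.ncard_image_of_injective _ (constTuple_injective k),
    Set.ncard_image_of_injective _ (raisedTuple_injective hk2)]

/-- Lemma 5.10 (restated). -/
theorem lem_pp7 (k : ℕ) (m : ℤ) (n : ℕ) (hk : 3 ≤ k) (hm : 0 ≤ m)
    (hn : k - 1 ≤ n) :
    {t : PTuple k | PkMem k m n t ∧
        dIdx k t.2.2.2 1 = dIdx k t.2.2.2 (k - 1) ∧ 2 ≤ dIdx k t.2.2.2 1 ∧
        t.1.part 1 = dIdx k t.2.2.2 1 ∧ t.1.part 2 = 0 ∧
        t.2.1.part 1 = dIdx k t.2.2.2 1}.ncard =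
      {t : PTuple k | PkMem k m (n + 1) t ∧ 3 ≤ dIdx k t.2.2.2 1 ∧
        (∀ j, 2 ≤ j → j ≤ k - 1 → dIdx k t.2.2.2 j = dIdx k t.2.2.2 1 - 1) ∧
        (∀ j, 1 ≤ j → j ≤ k - 2 → (gIdx k t.2.2.1 j).parts = []) ∧
        t.1.parts = []}.ncard :=
  lem_pp7_general k m n hk hm
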